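/- Assume m ≤ n^{24/25} and liminf_{n→∞} d0/ln n ≥ 1. Then the probability of the event that the minimum degree of G(n,m,p) is at least 2 but smaller than np/2 tends to 0 as n → ∞; i.e., P({δ(G(n,m,p)) ≥ 2} ∩ {δ(G(n,m,p)) ≥ np/2}ᶜ) = o(1). -/

import Mathlib

open MeasureTheory Filter

noncomputable def bern (p : ℝ) : Measure Bool :=
  (PMF.bernoulli (min (Real.toNNReal p) 1) (min_le_right _ _)).toMeasure

/-- The random intersection graph model: the sample space is the bipartite
choice structure `ω : Fin n → Fin m → Bool`, where `ω v w = true` means vertex `v`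
chose feature `w`, each choice made independently with probability `p`. -/
noncomputable def rig (n m : ℕ) (p : ℝ) : Measure (Fin n → Fin m → Bool) :=
  Measure.pi fun _ => Measure.pi fun _ => bern p

/-- The intersection graph determined by the choices `ω`:
two distinct vertices are adjacent iff they share a feature. -/
def rigGraph {n m : ℕ} (ω : Fin n → Fin m → Bool) : SimpleGraph (Fin n) where
  Adj v v' := v ≠ v' ∧ ∃ w, ω v w = true ∧ ω v' w = true
  symm := ⟨by rintro v v' ⟨h, w, h1, h2⟩; exact ⟨h.symm, w, h2, h1⟩⟩
  loopless := ⟨by rintro v ⟨h, -⟩; exact h rfl⟩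

/-- degree of `v` in the intersection graph -/
noncomputable def deg {n m : ℕ} (ω : Fin n → Fin m → Bool) (v : Fin n) : ℕ :=
  Set.ncard {u | (rigGraph ω).Adj v u}

/-- `W(v)`: number of features chosen by `v` -/
noncomputable def Wv {n m : ℕ} (ω : Fin n → Fin m → Bool) (v : Fin n) : ℕ :=
  Set.ncard {w | ω v w = true}

/-- `V(w)`: number of vertices choosing feature `w` -/
noncomputable def Vw {n m : ℕ} (ω : Fin n → Fin m → Bool) (w : Fin m) : ℕ :=
  Set.ncard {v | ω v w = true}

/-- `W'(v)`: number of features chosen by `v` that are chosen by at least two vertices -/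
noncomputable def Wv' {n m : ℕ} (ω : Fin n → Fin m → Bool) (v : Fin n) : ℕ :=
  Set.ncard {w | ω v w = true ∧ 2 ≤ Set.ncard {u | ω u w = true}}

/-- `W(S)`: number of features chosen by at least one vertex of `S` -/
noncomputable def WS {n m : ℕ} (ω : Fin n → Fin m → Bool) (S : Set (Fin n)) : ℕ :=
  Set.ncard {w | ∃ v ∈ S, ω v w = true}

/-- `V(R)`: number of vertices choosing at least one feature of `R` -/
noncomputable def VR {n m : ℕ} (ω : Fin n → Fin m → Bool) (R : Set (Fin m)) : ℕ :=
  Set.ncard {v | ∃ w ∈ R, ω v w = true}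

/-- `W''(K)`: number of features chosen by at least two vertices of `K` -/
noncomputable def WSpp {n m : ℕ} (ω : Fin n → Fin m → Bool) (K : Set (Fin n)) : ℕ :=
  Set.ncard {w | 2 ≤ Set.ncard {v | v ∈ K ∧ ω v w = true}}

/-- `N(S)`: number of vertices outside `S` adjacent to at least one vertex of `S` -/
noncomputable def NS {n m : ℕ} (ω : Fin n → Fin m → Bool) (S : Set (Fin n)) : ℕ :=
  Set.ncard {u | u ∉ S ∧ ∃ v ∈ S, (rigGraph ω).Adj v u}

noncomputable def d0 (n m : ℕ) (p : ℝ) : ℝ := m * p * (1 - (1 - p) ^ (n - 1))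

noncomputable def d1 (n m : ℕ) (p : ℝ) : ℝ := n * m * p ^ 2

/-!
If all degrees are positive and some vertex `v` has degree below `np/2`, pick a feature `w` of `v`:
every vertex choosing `w` is `v` or a neighbour of `v`, so `|V(w)| ≤ deg v + 1 < np/2 + 1`.
Now `|V(w)|` is a sum of `n` independent Bernoulli(`p`) variables, and the Chernoff bound at
`t = -log 2` gives `P(|V(w)| ≤ np/2 + 1) ≤ 2^(np/2+1) (1 - p/2)^n ≤ 2 exp(-c np)` with
`c = (1 - log 2)/2 > 0`. A union bound over the `m ≤ n` features multiplies this by `m`.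
Finally `mp ≥ d0 > (log n)/2` eventually and `m ≤ n^(24/25)` force `np ≥ n^(1/25) (log n)/2`,
which eventually exceeds `(2/c) log n`, so the probability is at most `2/n`.
-/

open ProbabilityTheory Real

instance (p : ℝ) : IsProbabilityMeasure (bern p) := PMF.toMeasure.isProbabilityMeasure _

section Bernoulli

variable {p : ℝ}

lemma measureReal_bern_singleton (hp₀ : 0 ≤ p) (hp₁ : p ≤ 1) (b : Bool) :
    (bern p).real {b} = cond b p (1 - p) := by
  have hmin : min p.toNNReal 1 = p.toNNReal := min_eq_left (Real.toNNReal_le_one.2 hp₁)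
  rw [measureReal_def, bern, PMF.toMeasure_apply_singleton _ _ (measurableSet_singleton b)]
  cases b
  · change (1 - ((min p.toNNReal 1 : NNReal) : ENNReal)).toReal = 1 - p
    rw [hmin, ENNReal.toReal_sub_of_le (by simpa using hp₁) ENNReal.one_ne_top]
    simp [hp₀]
  · change ((min p.toNNReal 1 : NNReal) : ENNReal).toReal = p
    simp [hmin, hp₀]

lemma mgf_bern_toNat (hp₀ : 0 ≤ p) (hp₁ : p ≤ 1) (t : ℝ) :
    mgf (fun b : Bool => (b.toNat : ℝ)) (bern p) t = 1 - p + p * exp t := by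
  rw [mgf, integral_fintype .of_finite]
  simp [measureReal_bern_singleton hp₀ hp₁]
  ring

end Bernoulli

section Column

variable {n m : ℕ} {p : ℝ}

instance : IsProbabilityMeasure (rig n m p) := by
  unfold rig; infer_instance

lemma measurePreserving_rig_apply (v : Fin n) (w : Fin m) :
    MeasurePreserving (fun ω : Fin n → Fin m → Bool => ω v w) (rig n m p) (bern p) :=
  (measurePreserving_eval (fun _ : Fin m => bern p) w).comp
    (measurePreserving_eval (fun _ : Fin n => Measure.pi fun _ : Fin m => bern p) v)

lemma iIndepFun_rig_column (w : Fin m) :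
    iIndepFun (fun v (ω : Fin n → Fin m → Bool) => ((ω v w).toNat : ℝ)) (rig n m p) :=
  iIndepFun_pi (X := fun _ (g : Fin m → Bool) => ((g w).toNat : ℝ))
    fun _ => (measurable_of_countable _).aemeasurable

lemma Vw_eq_sum_toNat (ω : Fin n → Fin m → Bool) (w : Fin m) :
    (Vw ω w : ℝ) = ∑ v, ((ω v w).toNat : ℝ) := by
  classical
  rw [Vw, Set.ncard_eq_toFinset_card']
  simp [Bool.toNat, Bool.cond_eq_ite, Finset.sum_boole]

lemma mgf_Vw (hp₀ : 0 ≤ p) (hp₁ : p ≤ 1) (w : Fin m) (t : ℝ) :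
    mgf (fun ω => (Vw ω w : ℝ)) (rig n m p) t = (1 - p + p * exp t) ^ n := by
  have hentry (v : Fin n) :
      mgf (fun ω : Fin n → Fin m → Bool => ((ω v w).toNat : ℝ)) (rig n m p) t
        = 1 - p + p * exp t := by
    rw [← mgf_bern_toNat hp₀ hp₁, ← (measurePreserving_rig_apply v w).map_eq,
      mgf_map (measurable_of_countable _).aemeasurable
        (measurable_of_countable _).aestronglyMeasurable]
    rfl
  simp_rw [Vw_eq_sum_toNat]
  rw [← Finset.sum_fn, (iIndepFun_rig_column w).mgf_sum (fun _ => measurable_of_countable _)]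
  simp [hentry]

lemma measureReal_rig_Vw_le (hp₀ : 0 ≤ p) (hp₁ : p ≤ 1) (w : Fin m) (ε : ℝ) :
    (rig n m p).real {ω | (Vw ω w : ℝ) ≤ ε} ≤ 2 ^ ε * (1 - p / 2) ^ n := by
  have h := measure_le_le_exp_mul_mgf (μ := rig n m p) (X := fun ω => (Vw ω w : ℝ)) ε
    (neg_nonpos.2 (log_nonneg one_le_two)) .of_finite
  rwa [mgf_Vw hp₀ hp₁, neg_neg, exp_neg, exp_log two_pos, ← rpow_def_of_pos two_pos,
    show 1 - p + p * 2⁻¹ = 1 - p / 2 by ring] at h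

end Column

section Graph

variable {n m : ℕ} {ω : Fin n → Fin m → Bool} {v : Fin n}

lemma Vw_le_deg_add_one {w : Fin m} (hvw : ω v w = true) : Vw ω w ≤ deg ω v + 1 := by
  have hsub : {u | ω u w = true} ⊆ insert v {u | (rigGraph ω).Adj v u} := by
    intro u hu
    by_cases huv : u = v
    · exact huv ▸ Set.mem_insert u _
    · exact Set.mem_insert_of_mem _ ⟨Ne.symm huv, w, hvw, hu⟩
  exact (Set.ncard_le_ncard hsub (Set.toFinite _)).trans (Set.ncard_insert_le _ _)

lemma exists_feature_of_deg_pos (h : 0 < deg ω v) : ∃ w, ω v w = true := by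
  obtain ⟨u, -, w, hvw, -⟩ := Set.nonempty_of_ncard_ne_zero h.ne'
  exact ⟨w, hvw⟩

lemma measureReal_rig_deg_pos_lt_le {p : ℝ} (hp₀ : 0 ≤ p) (hp₁ : p ≤ 1) (t : ℝ) :
    (rig n m p).real {ω | (∀ v, 0 < deg ω v) ∧ ∃ v, (deg ω v : ℝ) < t}
      ≤ m * (2 ^ (t + 1) * (1 - p / 2) ^ n) := by
  have hsub : {ω : Fin n → Fin m → Bool | (∀ v, 0 < deg ω v) ∧ ∃ v, (deg ω v : ℝ) < t}
      ⊆ ⋃ w, {ω | (Vw ω w : ℝ) ≤ t + 1} := by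
    rintro ω ⟨hpos, v, hlt⟩
    obtain ⟨w, hvw⟩ := exists_feature_of_deg_pos (hpos v)
    have hVw : (Vw ω w : ℝ) ≤ deg ω v + 1 := by exact_mod_cast Vw_le_deg_add_one hvw
    exact Set.mem_iUnion.2 ⟨w, show (Vw ω w : ℝ) ≤ t + 1 by linarith⟩
  calc _ ≤ ∑ w : Fin m, (rig n m p).real {ω | (Vw ω w : ℝ) ≤ t + 1} :=
        (measureReal_mono hsub).trans (measureReal_iUnion_fintype_le _)
    _ ≤ ∑ _w : Fin m, 2 ^ (t + 1) * (1 - p / 2) ^ n :=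
        Finset.sum_le_sum fun w _ => measureReal_rig_Vw_le hp₀ hp₁ w _
    _ = m * (2 ^ (t + 1) * (1 - p / 2) ^ n) := by simp

end Graph

lemma two_rpow_mul_one_sub_half_pow_le {p : ℝ} (hp₁ : p ≤ 1) (n : ℕ) :
    (2 : ℝ) ^ (n * p / 2 + 1) * (1 - p / 2) ^ n ≤ 2 * exp (-((1 - log 2) / 2 * (n * p))) := by
  have hpow : (1 - p / 2) ^ n ≤ exp (-(n * p / 2)) := by
    calc (1 - p / 2) ^ n ≤ exp (-(p / 2)) ^ n :=
          pow_le_pow_left₀ (by linarith) (one_sub_le_exp_neg _) n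
      _ = exp (-(n * p / 2)) := by rw [← exp_nat_mul]; ring_nf
  calc (2 : ℝ) ^ (n * p / 2 + 1) * (1 - p / 2) ^ n
      ≤ 2 * exp (log 2 * (n * p / 2)) * exp (-(n * p / 2)) := by
        rw [rpow_add two_pos, rpow_one, rpow_def_of_pos two_pos, mul_comm (2 : ℝ)]
        gcongr
    _ = 2 * exp (-((1 - log 2) / 2 * (n * p))) := by rw [mul_assoc, ← exp_add]; ring_nf

lemma d0_le_mul {n m : ℕ} {p : ℝ} (hp₀ : 0 ≤ p) (hp₁ : p ≤ 1) : d0 n m p ≤ m * p := by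
  have : 0 ≤ (1 - p) ^ (n - 1) := pow_nonneg (by linarith) _
  unfold d0; nlinarith [mul_nonneg (Nat.cast_nonneg m) hp₀]

lemma d0_nonneg {n m : ℕ} {p : ℝ} (hp₀ : 0 ≤ p) (hp₁ : p ≤ 1) : 0 ≤ d0 n m p :=
  mul_nonneg (mul_nonneg (Nat.cast_nonneg m) hp₀)
    (sub_nonneg.2 (pow_le_one₀ (by linarith) (by linarith)))

lemma tendsto_mul_div_log_atTop {m : ℕ → ℕ} {p : ℕ → ℝ} (hp₀ : ∀ n, 0 ≤ p n) (hp₁ : ∀ n, p n ≤ 1)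
    (hm : ∀ᶠ (n : ℕ) in atTop, (m n : ℝ) ≤ (n : ℝ) ^ ((24 : ℝ) / 25))
    (hd0 : 1 ≤ Filter.liminf (fun (n : ℕ) => d0 n (m n) (p n) / Real.log n) atTop) :
    Tendsto (fun n : ℕ => n * p n / log n) atTop atTop := by
  have hbdd : IsBoundedUnder (· ≥ ·) atTop (fun n : ℕ => d0 n (m n) (p n) / log n) :=
    isBoundedUnder_of ⟨0, fun n => div_nonneg (d0_nonneg (hp₀ n) (hp₁ n)) (log_natCast_nonneg n)⟩
  have hd0' : ∀ᶠ n : ℕ in atTop, 1 / 2 < d0 n (m n) (p n) / log n :=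
    eventually_lt_of_lt_liminf (by linarith) hbdd
  have hroot : Tendsto (fun n : ℕ => (n : ℝ) ^ ((1 : ℝ) / 25) / 2) atTop atTop :=
    ((tendsto_rpow_atTop (by norm_num)).comp tendsto_natCast_atTop_atTop).atTop_div_const two_pos
  refine tendsto_atTop_mono' _ ?_ hroot
  filter_upwards [hm, hd0', eventually_gt_atTop 1] with n hmn hd0n hn
  have hlog : 0 < log n := log_pos (by exact_mod_cast hn)
  have hmp : log n / 2 < m n * p n :=
    (by linarith [(lt_div_iff₀ hlog).1 hd0n] : log n / 2 < d0 n (m n) (p n)).trans_le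
      (d0_le_mul (hp₀ n) (hp₁ n))
  have hsplit : (n : ℝ) = n ^ ((1 : ℝ) / 25) * n ^ ((24 : ℝ) / 25) := by
    rw [← rpow_add (by positivity)]; norm_num
  rw [le_div_iff₀ hlog]
  calc (n : ℝ) ^ ((1 : ℝ) / 25) / 2 * log n ≤ n ^ ((1 : ℝ) / 25) * (m n * p n) := by
        rw [div_mul_eq_mul_div, mul_div_assoc]; gcongr
    _ ≤ n ^ ((1 : ℝ) / 25) * n ^ ((24 : ℝ) / 25) * p n := by
        rw [← mul_assoc]; gcongr; exact hp₀ n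
    _ = n * p n := by rw [← hsplit]

lemma mul_two_mul_exp_neg_le_two_div {M N x : ℝ} (hM₀ : 0 ≤ M) (hMN : M ≤ N) (hN : 0 < N)
    (hx : 2 * log N ≤ x) : M * (2 * exp (-x)) ≤ 2 / N := by
  calc M * (2 * exp (-x)) ≤ M * (2 * exp (-(2 * log N))) := by gcongr
    _ = 2 * M / N / N := by
        rw [exp_neg, two_mul (log _), exp_add, exp_log hN]
        field_simp
    _ ≤ 2 * N / N / N := by gcongr
    _ = 2 / N := by field_simp

theorem min_degree_jump (m : ℕ → ℕ) (p : ℕ → ℝ)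
    (hp : ∀ n, p n ∈ Set.Ioo (0 : ℝ) 1)
    (hm : ∀ᶠ (n : ℕ) in atTop, (m n : ℝ) ≤ (n : ℝ) ^ ((24 : ℝ) / 25))
    (hd0 : 1 ≤ Filter.liminf (fun (n : ℕ) => d0 n (m n) (p n) / Real.log n) atTop) :
    Tendsto (fun (n : ℕ) => (rig n (m n) (p n)
        {ω | (∀ v, 2 ≤ deg ω v) ∧ ¬(∀ v, (n : ℝ) * p n / 2 ≤ (deg ω v : ℝ))}).toReal)
      atTop (nhds 0) := by
  have hp₀ (n : ℕ) : 0 ≤ p n := (hp n).1.le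
  have hp₁ (n : ℕ) : p n ≤ 1 := (hp n).2.le
  have hc : 0 < 1 - log 2 := by linarith [log_two_lt_d9]
  have hgrowth :=
    (tendsto_mul_div_log_atTop hp₀ hp₁ hm hd0).eventually_ge_atTop (4 / (1 - log 2))
  refine squeeze_zero' (.of_forall fun _ => ENNReal.toReal_nonneg) ?_
    (tendsto_const_div_atTop_nhds_zero_nat 2)
  filter_upwards [hm, hgrowth, eventually_gt_atTop 1] with n hmn hnp hn
  have hn1 : (1 : ℝ) < n := by exact_mod_cast hn
  have hevent : {ω : Fin n → Fin (m n) → Bool |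
      (∀ v, 2 ≤ deg ω v) ∧ ¬(∀ v, (n : ℝ) * p n / 2 ≤ (deg ω v : ℝ))}
      ⊆ {ω | (∀ v, 0 < deg ω v) ∧ ∃ v, (deg ω v : ℝ) < n * p n / 2} := by
    rintro ω ⟨hdeg, hlow⟩
    simp only [not_forall, not_le] at hlow
    exact ⟨fun v => (hdeg v).trans_lt' two_pos, hlow⟩
  calc (rig n (m n) (p n)).real _
      ≤ m n * (2 ^ (n * p n / 2 + 1) * (1 - p n / 2) ^ n) :=
        (measureReal_mono hevent).trans (measureReal_rig_deg_pos_lt_le (hp₀ n) (hp₁ n) _)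
    _ ≤ m n * (2 * exp (-((1 - log 2) / 2 * (n * p n)))) :=
        mul_le_mul_of_nonneg_left (two_rpow_mul_one_sub_half_pow_le (hp₁ n) n) (Nat.cast_nonneg _)
    _ ≤ 2 / n := by
        refine mul_two_mul_exp_neg_le_two_div (Nat.cast_nonneg _)
          (hmn.trans (rpow_le_self_of_one_le hn1.le (by norm_num))) (by positivity) ?_
        rw [div_le_div_iff₀ hc (log_pos hn1)] at hnp
        linarith
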